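/- arXiv:1507.05392 — 2 statements merged into one kernel-verified Lean document; each statement's English description precedes it below -/
import Mathlib

section
/- Let Ω ⊂ ℝ^N be a bounded smooth domain, 2 ≤ q < p, a, b, λ, μ > 0, and let u_α be a positive solution of -Δu = α u^{q-1} + u^{p-1} in Ω with zero boundary values. Set T = ∫_Ω |∇u_α|² dx and s = (λ/(α μ^{(q-2)/(p-2)}))^{1/(p-q)}. Then the function φ = s · μ^{1/(2-p)} u_α solves -(a + b ∫_Ω |∇φ|² dx) Δφ = λ φ^{q-1} + μ φ^{p-1} in Ω if and only if a (α μ^{(q-2)/(p-2)}/λ)^{(p-2)/(p-q)} + b (α μ^{(q-2)/(p-2)}/λ)^{(p-4)/(p-q)} μ^{2/(2-p)} T = 1. -/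
/-!
Multiplying `u` by a constant `c > 0` multiplies `Δu` by `c` and `∫ |∇u|²` by `c²`, so `φ = c u`
turns the Kirchhoff equation into `(a + b c² T) c (α u^{q-1} + u^{p-1}) = λ c^{q-1} u^{q-1} +
μ c^{p-1} u^{p-1}`. For `c = s μ^{1/(2-p)}` the choice of `s` gives `λ c^{q-2} = α s^{p-2}` and
`μ c^{p-2} = s^{p-2}`, so the right-hand side is `s^{p-2} c (α u^{q-1} + u^{p-1})` and, as this
factor is positive, the equation holds iff `a + b c² T = s^{p-2}`; dividing by `s^{p-2}` gives
`f_{a,b,λ,μ}(α) = 1`.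
-/

open Real MeasureTheory Filter Topology Set Bornology

/-- The Laplacian of a function on Euclidean space. -/
noncomputable def lap {N : ℕ} (u : EuclideanSpace ℝ (Fin N) → ℝ)
    (x : EuclideanSpace ℝ (Fin N)) : ℝ :=
  ∑ i : Fin N, fderiv ℝ (fun y => fderiv ℝ u y (EuclideanSpace.single i 1)) x
    (EuclideanSpace.single i 1)

theorem gradient_const_mul {F : Type*} [NormedAddCommGroup F] [InnerProductSpace ℝ F]
    [CompleteSpace F] (c : ℝ) (u : F → ℝ) :
    gradient (fun y => c * u y) = c • gradient u := by
  funext x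
  change (InnerProductSpace.toDual ℝ F).symm (fderiv ℝ (c • u) x) = _
  rw [fderiv_const_smul_field, Pi.smul_apply, map_smul]
  rfl

theorem fderiv_const_mul_apply {F : Type*} [NormedAddCommGroup F] [NormedSpace ℝ F]
    (c : ℝ) (u : F → ℝ) (y v : F) :
    fderiv ℝ (fun y => c * u y) y v = c * fderiv ℝ u y v := by
  change fderiv ℝ (c • u) y v = _
  rw [fderiv_const_smul_field]
  rfl

theorem lap_const_mul {N : ℕ} (c : ℝ) (u : EuclideanSpace ℝ (Fin N) → ℝ)
    (x : EuclideanSpace ℝ (Fin N)) :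
    lap (fun y => c * u y) x = c * lap u x := by
  simp only [lap, fderiv_const_mul_apply, Finset.mul_sum]

theorem mul_rpow_sub_one_eq {c v : ℝ} (hc : 0 < c) (hv : 0 ≤ v) (r : ℝ) :
    (c * v) ^ (r - 1) = c ^ (r - 2) * (c * v ^ (r - 1)) := by
  rw [mul_rpow hc.le hv, show r - 1 = r - 2 + 1 by ring, rpow_add_one hc.ne']
  ring

theorem kirchhoff_const_mul_iff {N : ℕ} {Ω : Set (EuclideanSpace ℝ (Fin N))} (hΩ : Ω.Nonempty)
    {u : EuclideanSpace ℝ (Fin N) → ℝ} {q p α : ℝ} (hα : 0 < α) (hu : ∀ x ∈ Ω, 0 < u x)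
    (hPDE : ∀ x ∈ Ω, -lap u x = α * u x ^ (q - 1) + u x ^ (p - 1))
    {c lam μ M : ℝ} (hc : 0 < c) (hlam : lam * c ^ (q - 2) = α * M) (hμ : μ * c ^ (p - 2) = M)
    (a b : ℝ) :
    (∀ x ∈ Ω, -((a + b * ∫ y in Ω, ‖gradient (fun y => c * u y) y‖ ^ 2) *
          lap (fun y => c * u y) x) = lam * (c * u x) ^ (q - 1) + μ * (c * u x) ^ (p - 1)) ↔
      a + b * (c ^ 2 * ∫ y in Ω, ‖gradient u y‖ ^ 2) = M := by
  set K := a + b * (c ^ 2 * ∫ y in Ω, ‖gradient u y‖ ^ 2)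
  have henergy : ∫ y in Ω, ‖gradient (fun y => c * u y) y‖ ^ 2 =
      c ^ 2 * ∫ y in Ω, ‖gradient u y‖ ^ 2 := by
    simp_rw [gradient_const_mul, Pi.smul_apply, norm_smul, mul_pow, norm_eq_abs, sq_abs]
    exact integral_const_mul _ _
  have hlhs : ∀ x ∈ Ω, -((a + b * ∫ y in Ω, ‖gradient (fun y => c * u y) y‖ ^ 2) *
      lap (fun y => c * u y) x) = K * (c * (α * u x ^ (q - 1) + u x ^ (p - 1))) := by
    intro x hx
    rw [henergy, lap_const_mul]
    linear_combination K * c * hPDE x hx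
  have hrhs : ∀ x ∈ Ω, lam * (c * u x) ^ (q - 1) + μ * (c * u x) ^ (p - 1) =
      M * (c * (α * u x ^ (q - 1) + u x ^ (p - 1))) := by
    intro x hx
    rw [mul_rpow_sub_one_eq hc (hu x hx).le, mul_rpow_sub_one_eq hc (hu x hx).le]
    linear_combination c * u x ^ (q - 1) * hlam + c * u x ^ (p - 1) * hμ
  constructor
  · intro h
    obtain ⟨x, hx⟩ := hΩ
    have hX : 0 < c * (α * u x ^ (q - 1) + u x ^ (p - 1)) := by
      have := hu x hx
      positivity
    exact mul_right_cancel₀ hX.ne' ((hlhs x hx).symm.trans ((h x hx).trans (hrhs x hx)))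
  · intro h x hx
    rw [hlhs x hx, hrhs x hx, h]

noncomputable def kirchhoffScale (p μ s : ℝ) : ℝ := s * μ ^ (1 / (2 - p))

theorem kirchhoffScale_pos {p μ s : ℝ} (hμ : 0 < μ) (hs : 0 < s) : 0 < kirchhoffScale p μ s :=
  mul_pos hs (rpow_pos_of_pos hμ _)

theorem rpow_one_div_two_sub_rpow_sub_two {μ p : ℝ} (hμ : 0 < μ) (hp : p ≠ 2) :
    (μ ^ (1 / (2 - p))) ^ (p - 2) = μ⁻¹ := by
  have h2p : 2 - p ≠ 0 := sub_ne_zero.mpr (Ne.symm hp)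
  rw [← rpow_mul hμ.le, show 1 / (2 - p) * (p - 2) = -1 by field_simp; ring, rpow_neg_one]

theorem inv_rpow_rpow_div {s : ℝ} (hs : 0 < s) {d : ℝ} (hd : d ≠ 0) (r : ℝ) :
    (s ^ d)⁻¹ ^ (r / d) = (s ^ r)⁻¹ := by
  rw [inv_rpow (rpow_nonneg hs.le d), ← rpow_mul hs.le, mul_div_cancel₀ r hd]

theorem mul_kirchhoffScale_rpow_sub_two {p μ s : ℝ} (hp : p ≠ 2) (hμ : 0 < μ) (hs : 0 ≤ s) :
    μ * kirchhoffScale p μ s ^ (p - 2) = s ^ (p - 2) := by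
  rw [kirchhoffScale, mul_rpow hs (rpow_nonneg hμ.le _),
    rpow_one_div_two_sub_rpow_sub_two hμ hp]
  field_simp

theorem mul_kirchhoffScale_rpow_sub_two_of_rpow_eq {q p lam μ α s : ℝ} (hp : p ≠ 2)
    (hμ : 0 < μ) (hα : α ≠ 0) (hs : 0 < s)
    (hs_pow : s ^ (p - q) = lam / (α * μ ^ ((q - 2) / (p - 2)))) :
    lam * kirchhoffScale p μ s ^ (q - 2) = α * s ^ (p - 2) := by
  have h2p : 2 - p ≠ 0 := sub_ne_zero.mpr (Ne.symm hp)
  have hp2 : p - 2 ≠ 0 := sub_ne_zero.mpr hp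
  have hμ_pow : (μ ^ (1 / (2 - p))) ^ (q - 2) = (μ ^ ((q - 2) / (p - 2)))⁻¹ := by
    rw [← rpow_mul hμ.le, ← rpow_neg hμ.le]
    congr 1
    field_simp
    ring
  have hs_split : s ^ (p - 2) = s ^ (p - q) * s ^ (q - 2) := by
    rw [← rpow_add hs]
    ring_nf
  rw [kirchhoffScale, mul_rpow hs.le (rpow_nonneg hμ.le _), hμ_pow, hs_split, hs_pow]
  have : 0 < μ ^ ((q - 2) / (p - 2)) := rpow_pos_of_pos hμ _
  field_simp

theorem kirchhoff_scalar_eq_div {q p lam μ α s : ℝ} (hqp : q < p) (hμ : 0 < μ) (hs : 0 < s)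
    (hs_pow : s ^ (p - q) = lam / (α * μ ^ ((q - 2) / (p - 2)))) (a b T : ℝ) :
    a * (α * μ ^ ((q - 2) / (p - 2)) / lam) ^ ((p - 2) / (p - q)) +
        b * (α * μ ^ ((q - 2) / (p - 2)) / lam) ^ ((p - 4) / (p - q)) * μ ^ (2 / (2 - p)) * T =
      (a + b * (kirchhoffScale p μ s ^ 2 * T)) / s ^ (p - 2) := by
  have hpq : p - q ≠ 0 := sub_ne_zero.mpr hqp.ne'
  have hbase : α * μ ^ ((q - 2) / (p - 2)) / lam = (s ^ (p - q))⁻¹ := by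
    rw [hs_pow, inv_div]
  have hμ_sq : μ ^ (2 / (2 - p)) = (μ ^ (1 / (2 - p))) ^ 2 := by
    rw [← rpow_natCast, ← rpow_mul hμ.le]
    ring_nf
  have hs_split : s ^ (p - 2) = s ^ (p - 4) * s ^ 2 := by
    rw [← rpow_natCast, ← rpow_add hs]
    ring_nf
  rw [hbase, inv_rpow_rpow_div hs hpq, inv_rpow_rpow_div hs hpq, hμ_sq, hs_split, kirchhoffScale]
  have : 0 < s ^ (p - 4) := rpow_pos_of_pos hs _
  field_simp

theorem stmt1_general {N : ℕ} (Ω : Set (EuclideanSpace ℝ (Fin N)))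
    (hΩne : Ω.Nonempty)
    (q p a b lam μ α : ℝ) (hq : 2 ≤ q) (hqp : q < p)
    (hlam : 0 < lam) (hμ : 0 < μ) (hα : 0 < α)
    (u : EuclideanSpace ℝ (Fin N) → ℝ)
    (hupos : ∀ x ∈ Ω, 0 < u x)
    (hPDE : ∀ x ∈ Ω, -lap u x = α * u x ^ (q - 1) + u x ^ (p - 1))
    (T : ℝ) (hT : T = ∫ x in Ω, ‖gradient u x‖ ^ 2)
    (s : ℝ) (hs : s = (lam / (α * μ ^ ((q - 2) / (p - 2)))) ^ ((1 : ℝ) / (p - q)))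
    (φ : EuclideanSpace ℝ (Fin N) → ℝ)
    (hφ : φ = fun x => s * (μ ^ ((1 : ℝ) / (2 - p)) * u x)) :
    (∀ x ∈ Ω,
        -((a + b * ∫ y in Ω, ‖gradient φ y‖ ^ 2) * lap φ x) =
          lam * φ x ^ (q - 1) + μ * φ x ^ (p - 1)) ↔
      a * (α * μ ^ ((q - 2) / (p - 2)) / lam) ^ ((p - 2) / (p - q)) +
          b * (α * μ ^ ((q - 2) / (p - 2)) / lam) ^ ((p - 4) / (p - q)) *
            μ ^ (2 / (2 - p)) * T = 1 := by
  have hp : p ≠ 2 := by linarith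
  have hbase : 0 < lam / (α * μ ^ ((q - 2) / (p - 2))) := by positivity
  have hs_pos : 0 < s := hs ▸ rpow_pos_of_pos hbase _
  have hs_pow : s ^ (p - q) = lam / (α * μ ^ ((q - 2) / (p - 2))) := by
    rw [hs, one_div, rpow_inv_rpow hbase.le (sub_ne_zero.mpr hqp.ne')]
  have hφ_eq : φ = fun x => kirchhoffScale p μ s * u x := by
    simp only [hφ, kirchhoffScale, mul_assoc]
  rw [hφ_eq, kirchhoff_const_mul_iff hΩne hα hupos hPDE (kirchhoffScale_pos hμ hs_pos)
      (mul_kirchhoffScale_rpow_sub_two_of_rpow_eq hp hμ hα.ne' hs_pos hs_pow)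
      (mul_kirchhoffScale_rpow_sub_two hp hμ hs_pos.le),
    kirchhoff_scalar_eq_div hqp hμ hs_pos hs_pow, ← hT,
    div_eq_one_iff_eq (rpow_pos_of_pos hs_pos _).ne']

/-- Proposition 1.1 of the paper: with `T = ∫_Ω |∇u_α|²` and
`s = (λ/(α μ^((q-2)/(p-2))))^(1/(p-q))`, the function `φ = s μ^(1/(2-p)) u_α`
solves the Kirchhoff problem iff
`a (αμ^((q-2)/(p-2))/λ)^((p-2)/(p-q)) + b (αμ^((q-2)/(p-2))/λ)^((p-4)/(p-q)) μ^(2/(2-p)) T = 1`. -/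
theorem stmt1 {N : ℕ} (hN : 1 ≤ N) (Ω : Set (EuclideanSpace ℝ (Fin N)))
    (hΩo : IsOpen Ω) (hΩb : IsBounded Ω) (hΩne : Ω.Nonempty)
    (q p a b lam μ α : ℝ) (hq : 2 ≤ q) (hqp : q < p)
    (ha : 0 < a) (hb : 0 < b) (hlam : 0 < lam) (hμ : 0 < μ) (hα : 0 < α)
    (u : EuclideanSpace ℝ (Fin N) → ℝ) (hreg : ContDiff ℝ 2 u)
    (hupos : ∀ x ∈ Ω, 0 < u x)
    (hPDE : ∀ x ∈ Ω, -lap u x = α * u x ^ (q - 1) + u x ^ (p - 1))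
    (hbd : ∀ x ∈ frontier Ω, u x = 0)
    (T : ℝ) (hT : T = ∫ x in Ω, ‖gradient u x‖ ^ 2)
    (s : ℝ) (hs : s = (lam / (α * μ ^ ((q - 2) / (p - 2)))) ^ ((1 : ℝ) / (p - q)))
    (φ : EuclideanSpace ℝ (Fin N) → ℝ)
    (hφ : φ = fun x => s * (μ ^ ((1 : ℝ) / (2 - p)) * u x)) :
    (∀ x ∈ Ω,
        -((a + b * ∫ y in Ω, ‖gradient φ y‖ ^ 2) * lap φ x) =
          lam * φ x ^ (q - 1) + μ * φ x ^ (p - 1)) ↔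
      a * (α * μ ^ ((q - 2) / (p - 2)) / lam) ^ ((p - 2) / (p - q)) +
          b * (α * μ ^ ((q - 2) / (p - 2)) / lam) ^ ((p - 4) / (p - q)) *
            μ ^ (2 / (2 - p)) * T = 1 :=
  stmt1_general Ω hΩne q p a b lam μ α hq hqp hlam hμ hα u hupos hPDE T hT s hs φ hφ
end

section
/- Let 2 < p < 4, a, b, λ, μ, C > 0 and define g(α) = (a/λ) α + b C (α/λ)^{(p-4)/(p-2)} μ^{2/(2-p)} for α > 0. If (2/((p-2)μ)) ((p-2)a/(4-p))^{(4-p)/2} (bC)^{(p-2)/2} < 1, then there exists α* > 0 with g(α*) < 1; moreover g(α) → +∞ both as α → 0⁺ and as α → +∞. -/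
open Real Filter Topology Set

/-!
Writing `x = α / λ` and `D = b C μ^(2/(2-p))`, the function is `g = φ(α/λ)` with
`φ x = a x + D x^κ`, `κ = (p-4)/(p-2) < 0`. The linear term forces `φ → ∞` at infinity and the
negative power forces `φ → ∞` at `0⁺`. At the critical point `t = (D/Y)^((p-2)/2)` of `φ`, where
`Y = (p-2)a/(4-p)`, one has `D t^κ = Y t`, so `φ t = (2/(p-2)) Y^((4-p)/2) D^((p-2)/2)`; since
`D^((p-2)/2) = (bC)^((p-2)/2) / μ`, this minimum value is exactly the left side of the hypothesis.
-/

section PowerSum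

variable {c D κ : ℝ}

lemma tendsto_mul_add_mul_rpow_nhdsGT_zero (hc : 0 ≤ c) (hD : 0 < D) (hκ : κ < 0) :
    Tendsto (fun x : ℝ => c * x + D * x ^ κ) (𝓝[>] 0) atTop := by
  refine tendsto_atTop_add_left_of_le' _ 0 ?_
    ((tendsto_rpow_neg_nhdsGT_zero hκ).const_mul_atTop hD)
  filter_upwards [self_mem_nhdsWithin] with x hx
  exact mul_nonneg hc (le_of_lt hx)

lemma tendsto_mul_add_mul_rpow_atTop (hc : 0 < c) (hD : 0 ≤ D) :
    Tendsto (fun x : ℝ => c * x + D * x ^ κ) atTop atTop := by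
  refine tendsto_atTop_add_right_of_le' _ 0 (tendsto_id.const_mul_atTop hc) ?_
  filter_upwards [eventually_ge_atTop (0 : ℝ)] with x hx
  exact mul_nonneg hD (rpow_nonneg hx _)

end PowerSum

lemma tendsto_div_const_nhdsGT_zero {r : ℝ} (hr : 0 < r) :
    Tendsto (fun x : ℝ => x / r) (𝓝[>] 0) (𝓝[>] 0) := by
  refine tendsto_nhdsWithin_of_tendsto_nhds_of_eventually_within _ ?_ ?_
  · simpa using ((tendsto_id (x := 𝓝 (0 : ℝ))).div_const r).mono_left nhdsWithin_le_nhds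
  · filter_upwards [self_mem_nhdsWithin] with x hx using div_pos hx hr

lemma mul_add_mul_rpow_at_critical_point {p a D Y t : ℝ} (hp : 2 < p) (hp4 : p < 4)
    (ha : 0 < a) (hD : 0 < D) (hY : Y = (p - 2) * a / (4 - p))
    (ht : t = (D / Y) ^ ((p - 2) / 2)) :
    a * t + D * t ^ ((p - 4) / (p - 2)) = 2 / (p - 2) * Y ^ ((4 - p) / 2) * D ^ ((p - 2) / 2) := by
  have hp2 : 0 < p - 2 := by linarith
  have h4p : 0 < 4 - p := by linarith
  have hY_pos : 0 < Y := hY ▸ div_pos (mul_pos hp2 ha) h4p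
  have hDY : 0 < D / Y := div_pos hD hY_pos
  have ht_pow : t ^ ((p - 4) / (p - 2)) = t * Y / D := by
    rw [ht, ← rpow_mul hDY.le, show (p - 2) / 2 * ((p - 4) / (p - 2)) = (p - 2) / 2 + (-1) by
      field_simp; ring, rpow_add hDY, rpow_neg_one]
    field_simp
  have hY_pow : Y ^ ((4 - p) / 2) = Y / Y ^ ((p - 2) / 2) := by
    rw [show (4 - p) / 2 = 1 - (p - 2) / 2 by ring, rpow_sub hY_pos, rpow_one]
  have ha' : a = Y * (4 - p) / (p - 2) := by rw [hY]; field_simp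
  rw [ht_pow, ht, div_rpow hD.le hY_pos.le, hY_pow, ha']
  field_simp
  ring

lemma rpow_two_div_two_sub_rpow {p μ : ℝ} (hp : p ≠ 2) (hμ : 0 ≤ μ) :
    (μ ^ (2 / (2 - p))) ^ ((p - 2) / 2) = μ⁻¹ := by
  have : 2 - p ≠ 0 := sub_ne_zero.mpr hp.symm
  rw [← rpow_mul hμ, show 2 / (2 - p) * ((p - 2) / 2) = -1 by field_simp; ring, rpow_neg_one]

/-- quantitative condition from Theorem 1.3(2): if
`(2/((p-2)μ)) ((p-2)a/(4-p))^((4-p)/2) (bC)^((p-2)/2) < 1` then the comparison function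
`g(α) = (a/λ)α + bC(α/λ)^((p-4)/(p-2)) μ^(2/(2-p))` dips below `1` at some `α* > 0`;
moreover `g → +∞` as `α → 0⁺` and as `α → +∞`. -/
theorem stmt5 (p a b lam μ C : ℝ) (hp : 2 < p) (hp4 : p < 4)
    (ha : 0 < a) (hb : 0 < b) (hlam : 0 < lam) (hμ : 0 < μ) (hC : 0 < C)
    (g : ℝ → ℝ)
    (hg : g = fun α =>
      a / lam * α + b * C * (α / lam) ^ ((p - 4) / (p - 2)) * μ ^ (2 / (2 - p)))
    (hcond : 2 / ((p - 2) * μ) * ((p - 2) * a / (4 - p)) ^ ((4 - p) / 2) *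
        (b * C) ^ ((p - 2) / 2) < 1) :
    (∃ α : ℝ, 0 < α ∧ g α < 1) ∧
      Tendsto g (nhdsWithin 0 (Set.Ioi 0)) atTop ∧
      Tendsto g atTop atTop := by
  set D := b * C * μ ^ (2 / (2 - p))
  have hD : 0 < D := by positivity
  set φ : ℝ → ℝ := fun x => a * x + D * x ^ ((p - 4) / (p - 2))
  have hgφ : g = φ ∘ fun α => α / lam := by
    funext α
    simp only [hg, φ, D, Function.comp_apply]
    ring
  refine ⟨?_, ?_, ?_⟩
  · set t := (D / ((p - 2) * a / (4 - p))) ^ ((p - 2) / 2)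
    refine ⟨lam * t, by positivity, ?_⟩
    have hφt := mul_add_mul_rpow_at_critical_point hp hp4 ha hD rfl rfl
    rw [mul_rpow (by positivity) (by positivity), rpow_two_div_two_sub_rpow hp.ne' hμ.le] at hφt
    rw [hgφ, Function.comp_apply, mul_div_cancel_left₀ t hlam.ne']
    convert hcond using 1
    rw [show φ t = _ from hφt, ← div_div]
    ring
  · have hκ : (p - 4) / (p - 2) < 0 := div_neg_of_neg_of_pos (by linarith) (by linarith)
    rw [hgφ]
    exact (tendsto_mul_add_mul_rpow_nhdsGT_zero ha.le hD hκ).comp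
      (tendsto_div_const_nhdsGT_zero hlam)
  · rw [hgφ]
    exact (tendsto_mul_add_mul_rpow_atTop ha hD.le).comp (tendsto_id.atTop_div_const hlam)
end
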